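/- For every prime number p and all natural numbers a, b with a ≥ 4, the diagonal quadratic form over ℤ_p in a + b variables with a coefficients equal to +1 and b coefficients equal to −1 is equivalent (isometric) to the diagonal quadratic form in a + b variables with a − 4 coefficients equal to +1 and b + 4 coefficients equal to −1. -/

import Mathlib

/-!
Over `ℤ_[p]` the element `-1` is the norm of a quaternion `q`: for odd `p`, lift a solution
of `x² + y² = -1` in `ZMod p` by Hensel's lemma; for `p = 2`, Hensel's lemma makes `-7` a
square and `-1 = 2² + (√-7)² + 1² + 1²`. Since the quaternion norm is multiplicative,
`x ↦ q * x` carries `x₁² + x₂² + x₃² + x₄²` to its negative, so four `+1` coefficients can be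
traded for four `-1`.
-/

open QuadraticMap Quaternion

/- `QuaternionAlgebra.linearEquivTuple (-1) 0 (-1)` has domain `ℍ[R,-1,0,-1]`, whose instances
`rw` does not identify with those of `ℍ[R]`; this copy is stated on `ℍ[R]` itself. -/
def Quaternion.linearEquivTuple (R : Type*) [CommRing R] : ℍ[R] ≃ₗ[R] (Fin 4 → R) :=
  QuaternionAlgebra.linearEquivTuple (-1) 0 (-1)

theorem Quaternion.linearEquivTuple_apply {R : Type*} [CommRing R] (x : ℍ[R]) :
    Quaternion.linearEquivTuple R x = ![x.re, x.imI, x.imJ, x.imK] :=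
  rfl

theorem Quaternion.normSq_eq_weightedSumSquares {R : Type*} [CommRing R] (x : ℍ[R]) :
    normSq x = weightedSumSquares R (fun _ : Fin 4 => (1 : R)) (linearEquivTuple R x) := by
  simp [weightedSumSquares_apply, Fin.sum_univ_four, linearEquivTuple_apply, normSq_def']
  ring

namespace QuadraticMap

variable {R : Type*} [CommRing R] {ι κ : Type*} [Fintype ι] [Fintype κ]

theorem weightedSumSquares_equivalent_of_equiv {v : ι → R} {w : κ → R} (e : ι ≃ κ)
    (h : ∀ i, w (e i) = v i) :
    (weightedSumSquares R v).Equivalent (weightedSumSquares R w) :=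
  ⟨{ LinearEquiv.funCongrLeft R R e.symm with
      map_app' := fun x => by
        simp only [weightedSumSquares_apply]
        exact (Fintype.sum_equiv e _ _ fun i => by simp [h]).symm }⟩

theorem weightedSumSquares_sumElim_equivalent_prod (v : ι → R) (w : κ → R) :
    (weightedSumSquares R (Sum.elim v w)).Equivalent
      ((weightedSumSquares R v).prod (weightedSumSquares R w)) :=
  ⟨{ LinearEquiv.sumArrowLequivProdArrow ι κ R R with
      map_app' := fun x => by simp [weightedSumSquares_apply, Fintype.sum_sum_type] }⟩

theorem Equivalent.weightedSumSquares_sumElim {v v' : ι → R} {w w' : κ → R}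
    (hv : (weightedSumSquares R v).Equivalent (weightedSumSquares R v'))
    (hw : (weightedSumSquares R w).Equivalent (weightedSumSquares R w')) :
    (weightedSumSquares R (Sum.elim v w)).Equivalent (weightedSumSquares R (Sum.elim v' w')) :=
  (weightedSumSquares_sumElim_equivalent_prod v w).trans <|
    (hv.prod hw).trans (weightedSumSquares_sumElim_equivalent_prod v' w').symm

theorem weightedSumSquares_one_equivalent_neg_one {q : ℍ[R]} (hq : normSq q = -1) :
    (weightedSumSquares R (fun _ : Fin 4 => (1 : R))).Equivalent
      (weightedSumSquares R (fun _ : Fin 4 => (-1 : R))) := by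
  have hinv : q * -star q = 1 ∧ -star q * q = 1 := by
    simp [self_mul_star, star_mul_self, hq]
  let T := Quaternion.linearEquivTuple R
  let L : ℍ[R] ≃ₗ[R] ℍ[R] :=
    .ofLinearMap (f := LinearMap.mulLeft R q) (g := LinearMap.mulLeft R (-star q))
      (LinearMap.ext fun x => by
        rw [LinearMap.comp_apply, LinearMap.mulLeft_apply, LinearMap.mulLeft_apply, ← mul_assoc,
          hinv.1, one_mul, LinearMap.id_apply])
      (LinearMap.ext fun x => by
        rw [LinearMap.comp_apply, LinearMap.mulLeft_apply, LinearMap.mulLeft_apply, ← mul_assoc,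
          hinv.2, one_mul, LinearMap.id_apply])
  refine ⟨{ T.symm ≪≫ₗ L ≪≫ₗ T with map_app' := fun x => ?_ }⟩
  have hneg : ∀ y : Fin 4 → R, weightedSumSquares R (fun _ : Fin 4 => (-1 : R)) y
      = -weightedSumSquares R (fun _ : Fin 4 => (1 : R)) y := by
    simp [weightedSumSquares_apply]
  change weightedSumSquares R (fun _ : Fin 4 => (-1 : R)) (T (q * T.symm x)) = _
  rw [hneg]
  dsimp only [T]
  rw [← normSq_eq_weightedSumSquares, map_mul, hq, normSq_eq_weightedSumSquares,
    LinearEquiv.apply_symm_apply]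
  ring

theorem weightedSumSquares_signs_equivalent_of_equivalent {k : ℕ}
    (hk : (weightedSumSquares R (fun _ : Fin k => (1 : R))).Equivalent
      (weightedSumSquares R (fun _ : Fin k => (-1 : R))))
    {a : ℕ} (b : ℕ) (ha : k ≤ a) :
    (weightedSumSquares R (fun i : Fin (a + b) => if (i : ℕ) < a then (1 : R) else -1)).Equivalent
      (weightedSumSquares R
        (fun i : Fin ((a - k) + (b + k)) => if (i : ℕ) < a - k then (1 : R) else -1)) := by
  let signs : Fin (a - k + b) → R := fun j => if (j : ℕ) < a - k then 1 else -1
  have hpos := weightedSumSquares_equivalent_of_equiv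
    ((Equiv.sumComm _ _).trans (finSumFinEquiv.trans (finCongr (by omega))))
    (v := Sum.elim signs fun _ : Fin k => (1 : R))
    (w := fun i : Fin (a + b) => if (i : ℕ) < a then (1 : R) else -1) <| by
      rintro (j | i)
      · simp [signs, Nat.lt_sub_iff_add_lt']
      · simp [show (i : ℕ) < a by omega]
  have hneg := weightedSumSquares_equivalent_of_equiv
    (finSumFinEquiv.trans (finCongr (by omega)))
    (v := Sum.elim signs fun _ : Fin k => (-1 : R))
    (w := fun i : Fin ((a - k) + (b + k)) => if (i : ℕ) < a - k then (1 : R) else -1) <| by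
      rintro (j | i)
      · simp [signs]
      · simp [show ¬(a - k + b + (i : ℕ) < a - k) by omega]
  exact hpos.symm.trans (((Equivalent.refl _).weightedSumSquares_sumElim hk).trans hneg)

end QuadraticMap

namespace PadicInt

variable {p : ℕ} [Fact p.Prime]

theorem norm_lt_one_iff_toZMod_eq_zero (z : ℤ_[p]) : ‖z‖ < 1 ↔ toZMod z = 0 := by
  rw [← RingHom.mem_ker, ker_toZMod, IsLocalRing.mem_maximalIdeal, mem_nonunits_iff,
    not_isUnit_iff]

theorem norm_eq_one_iff_toZMod_ne_zero (z : ℤ_[p]) : ‖z‖ = 1 ↔ toZMod z ≠ 0 := by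
  rw [ne_eq, ← norm_lt_one_iff_toZMod_eq_zero, not_lt]
  exact (norm_le_one z).ge_iff_eq.symm

open Polynomial in
theorem exists_sq_eq_of_norm_sq_sub_lt {c z : ℤ_[p]} (h : ‖z ^ 2 - c‖ < ‖2 * z‖ ^ 2) :
    ∃ y : ℤ_[p], y ^ 2 = c := by
  have hder : (X ^ 2 - C c).derivative.aeval z = 2 * z := by
    rw [derivative_sub, derivative_X_sq, derivative_C, sub_zero]
    simp
  obtain ⟨y, hy, -⟩ := hensels_lemma (F := X ^ 2 - C c) (a := z) (by rw [hder]; simpa using h)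
  exact ⟨y, by simpa [sub_eq_zero] using hy⟩

theorem exists_sq_add_sq_eq_neg_one (hp : p ≠ 2) : ∃ u v : ℤ_[p], u ^ 2 + v ^ 2 = -1 := by
  obtain ⟨x, y, hxy⟩ := ZMod.sq_add_sq p (-1)
  wlog hx : x ≠ 0 generalizing x y
  · refine this y x (by linear_combination hxy) fun hy => ?_
    simp_all
  obtain ⟨X, rfl⟩ := ZMod.ringHom_surjective toZMod x
  obtain ⟨Y, rfl⟩ := ZMod.ringHom_surjective toZMod y
  have h2 : (2 : ZMod p) ≠ 0 := Ring.two_ne_zero (by rwa [ZMod.ringChar_zmod_n])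
  obtain ⟨u, hu⟩ := exists_sq_eq_of_norm_sq_sub_lt (z := X) (c := -1 - Y ^ 2) <| by
    have h2X : toZMod (2 * X) ≠ 0 := by rw [map_mul, map_ofNat]; exact mul_ne_zero h2 hx
    rw [(norm_eq_one_iff_toZMod_ne_zero _).2 h2X, one_pow, norm_lt_one_iff_toZMod_eq_zero]
    simp only [map_sub, map_pow, map_neg, map_one]
    linear_combination hxy
  exact ⟨u, Y, by rw [hu]; ring⟩

theorem exists_sq_eq_neg_seven : ∃ z : ℤ_[2], z ^ 2 = -7 :=
  exists_sq_eq_of_norm_sq_sub_lt (z := 1) <| by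
    have h2 : ‖(2 : ℤ_[2])‖ = 2⁻¹ := by simpa using norm_p (p := 2)
    rw [show (1 : ℤ_[2]) ^ 2 - -7 = 2 ^ 3 by norm_num, mul_one, norm_pow, h2]
    norm_num

theorem exists_normSq_eq_neg_one : ∃ q : ℍ[ℤ_[p]], normSq q = -1 := by
  rcases eq_or_ne p 2 with rfl | hp
  · obtain ⟨z, hz⟩ := exists_sq_eq_neg_seven
    exact ⟨⟨2, z, 1, 1⟩, (normSq_def' _).trans (by linear_combination hz)⟩
  · obtain ⟨u, v, huv⟩ := exists_sq_add_sq_eq_neg_one hp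
    exact ⟨⟨u, v, 0, 0⟩, (normSq_def' _).trans (by linear_combination huv)⟩

end PadicInt

theorem signature_shift_by_four_equiv_padicInt (p : ℕ) [Fact p.Prime]
    (a b : ℕ) (ha : 4 ≤ a) :
    (QuadraticMap.weightedSumSquares ℤ_[p]
        (fun i : Fin (a + b) => if (i : ℕ) < a then (1 : ℤ_[p]) else -1)).Equivalent
      (QuadraticMap.weightedSumSquares ℤ_[p]
        (fun i : Fin ((a - 4) + (b + 4)) => if (i : ℕ) < a - 4 then (1 : ℤ_[p]) else -1)) := by
  obtain ⟨q, hq⟩ := PadicInt.exists_normSq_eq_neg_one (p := p)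
  exact weightedSumSquares_signs_equivalent_of_equivalent
    (weightedSumSquares_one_equivalent_neg_one hq) b ha
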